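/- arXiv:1207.0066 — 2 statements merged into one kernel-verified Lean document; each statement's English description precedes it below -/
import Mathlib

section
/- Let P be a group, Q and R subgroups of P, φ : Q → P and ψ : R → P group homomorphisms, and consider the left action of P × P on the coset space (P × P)/Δ_φ(Q), where Δ_φ(Q) = {(φ(x), x) : x ∈ Q}. Then for (u,v) ∈ P × P, the coset (u,v)Δ_φ(Q) is fixed by every element of Δ_ψ(R) = {(ψ(w), w) : w ∈ R} if and only if v⁻¹Rv ≤ Q and ψ(w) = u·φ(v⁻¹wv)·u⁻¹ for all w ∈ R. -/
/-- The twisted diagonal `Δ_ψ(S) = {(ψ(x), x) : x ∈ S} ≤ P × P`. -/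
def tdiag {P : Type*} [Group P] (S : Subgroup P) (ψ : S →* P) : Subgroup (P × P) :=
  (ψ.prod S.subtype).range

/-- The coset `(u,v)Δ_φ(Q)` in `(P×P)/Δ_φ(Q)` is fixed by every element of `Δ_ψ(R)`
iff `v⁻¹Rv ≤ Q` and `ψ(w) = u·φ(v⁻¹wv)·u⁻¹` for all `w ∈ R`. -/
theorem fixed_coset_iff {P : Type*} [Group P] (Q R : Subgroup P)
    (φ : Q →* P) (ψ : R →* P) (u v : P) :
    (∀ w : R, ((ψ w, (w : P)) : P × P) •
        (QuotientGroup.mk (u, v) : (P × P) ⧸ tdiag Q φ) = QuotientGroup.mk (u, v)) ↔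
      ∃ h : ∀ w : R, v⁻¹ * (w : P) * v ∈ Q,
        ∀ w : R, ψ w = u * φ ⟨v⁻¹ * (w : P) * v, h w⟩ * u⁻¹ := by
  have key : ∀ w : R, (((ψ w, (w : P)) : P × P) •
        (QuotientGroup.mk (u, v) : (P × P) ⧸ tdiag Q φ) = QuotientGroup.mk (u, v)) ↔
      ∃ x : Q, φ x = u⁻¹ * ψ w * u ∧ (x : P) = v⁻¹ * (w : P) * v := by
    intro w
    rw [MulAction.Quotient.smul_mk, eq_comm, QuotientGroup.eq]
    constructor
    · rintro ⟨x, hx⟩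
      rw [Prod.ext_iff] at hx
      obtain ⟨h1, h2⟩ := hx
      simp only [MonoidHom.prod_apply, Subgroup.coe_subtype, Prod.fst_mul, Prod.snd_mul,
        Prod.fst_inv, Prod.snd_inv, smul_eq_mul] at h1 h2 ⊢
      exact ⟨x, by rw [h1]; group, by rw [h2]; group⟩
    · rintro ⟨x, h1, h2⟩
      refine ⟨x, ?_⟩
      ext <;> simp [h1, h2] <;> group
  constructor
  · intro H
    have h : ∀ w : R, v⁻¹ * (w : P) * v ∈ Q := by
      intro w
      obtain ⟨x, _, hx2⟩ := (key w).mp (H w)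
      rw [← hx2]; exact x.2
    refine ⟨h, fun w => ?_⟩
    obtain ⟨x, hx1, hx2⟩ := (key w).mp (H w)
    have : x = ⟨v⁻¹ * (w : P) * v, h w⟩ := Subtype.ext hx2
    rw [← this, hx1]; group
  · rintro ⟨h, H⟩ w
    exact (key w).mpr ⟨⟨v⁻¹ * (w : P) * v, h w⟩, by rw [H w]; group, rfl⟩
end

section
/- Let G be a finite group and H, K ≤ G subgroups, and let W ⊆ G be a set of representatives for the double cosets K\G/H. Then on abelianizations, the composition of the map H^{ab} → G^{ab} induced by the inclusion H ≤ G with the transfer Ver^G_K : G^{ab} → K^{ab} equals the sum over w ∈ W of the compositions H^{ab} → (K ∩ wHw⁻¹)^{ab} → K^{ab}, where the first map is the transfer Ver^H_{w⁻¹Kw ∩ H} followed by the isomorphism induced by conjugation x ↦ wxw⁻¹ from (w⁻¹Kw ∩ H)^{ab} to (K ∩ wHw⁻¹)^{ab}, and the second map is induced by the inclusion K ∩ wHw⁻¹ ≤ K. (Mackey formula for the transfer on abelianizations.) -/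
/-! The orbit of `w⁻¹K ∈ G ⧸ K` under `H` is `H ⧸ (w⁻¹Kw ∩ H)`, via `h ↦ h w⁻¹ K`, and the double
cosets `K w H`, `w ∈ W`, index these orbits. Computing `Ver^G_K(x)` for `x ∈ H` with the
transversal `{h w⁻¹}`, where `h` runs over representatives of `H ⧸ (w⁻¹Kw ∩ H)`, each factor is the
`w`-conjugate of the corresponding factor of `Ver^H_{w⁻¹Kw ∩ H}(x)`. -/

/-- `w⁻¹Kw ∩ H`, as a subgroup of `H`. -/
def dcA {G : Type*} [Group G] (H K : Subgroup G) (w : G) : Subgroup H :=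
  (Subgroup.map (MulAut.conj w⁻¹).toMonoidHom K).subgroupOf H

/-- `K ∩ wHw⁻¹`, as a subgroup of `K`. -/
def dcB {G : Type*} [Group G] (H K : Subgroup G) (w : G) : Subgroup K :=
  (Subgroup.map (MulAut.conj w).toMonoidHom H).subgroupOf K

lemma dcA_conj_mem {G : Type*} [Group G] {H K : Subgroup G} {w : G}
    (a : dcA H K w) : w * ((a : H) : G) * w⁻¹ ∈ K := by
  have h := a.2
  simp only [dcA, Subgroup.mem_subgroupOf] at h
  obtain ⟨k, hk, hkk⟩ := h
  have h2 : w * ((a : H) : G) * w⁻¹ = k := by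
    rw [← hkk]
    simp only [MulEquiv.coe_toMonoidHom, MulAut.conj_apply]
    group
  rw [h2]; exact hk

lemma dcA_conj_mem_dcB {G : Type*} [Group G] {H K : Subgroup G} {w : G}
    (a : dcA H K w) :
    (⟨w * ((a : H) : G) * w⁻¹, dcA_conj_mem a⟩ : K) ∈ dcB H K w := by
  simp only [dcB, Subgroup.mem_subgroupOf]
  refine ⟨((a : H) : G), (a : H).2, ?_⟩
  simp [MulAut.conj_apply]

/-- Conjugation by `w`, as a homomorphism `w⁻¹Kw ∩ H → K ∩ wHw⁻¹`. -/
def dcConj {G : Type*} [Group G] (H K : Subgroup G) (w : G) :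
    dcA H K w →* dcB H K w where
  toFun a := ⟨⟨w * ((a : H) : G) * w⁻¹, dcA_conj_mem a⟩, dcA_conj_mem_dcB a⟩
  map_one' := by
    ext
    simp
  map_mul' a b := by
    ext
    simp only [Subgroup.coe_mul, MulMemClass.mk_mul_mk]
    group

lemma QuotientGroup.inv_mul_mul_mem_of_coe_eq_inv_smul {G : Type*} [Group G] {L : Subgroup G}
    {a b g : G} (h : (b : G ⧸ L) = g⁻¹ • (a : G ⧸ L)) : a⁻¹ * (g * b) ∈ L := by
  rw [← QuotientGroup.eq, ← smul_eq_mul, ← MulAction.Quotient.smul_mk, h, smul_inv_smul]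

namespace MonoidHom

open QuotientGroup

variable {G : Type*} [Group G] {L : Subgroup G} {A : Type*} [CommGroup A]

theorem transfer_eq_prod_of_bijective [L.FiniteIndex] (ϕ : L →* A) {ι : Type*} [Fintype ι]
    (s : ι → G) (hs : Function.Bijective fun i ↦ (s i : G ⧸ L)) (g : G) (π : ι → ι)
    (hπ : ∀ i, (s (π i) : G ⧸ L) = g⁻¹ • (s i : G ⧸ L)) :
    transfer ϕ g = ∏ i, ϕ ⟨(s i)⁻¹ * (g * s (π i)), inv_mul_mul_mem_of_coe_eq_inv_smul (hπ i)⟩ := by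
  let := L.fintypeQuotientOfFiniteIndex
  let e := Equiv.ofBijective _ hs
  have he : ∀ q, ((s (e.symm q) : G) : G ⧸ L) = q := e.apply_symm_apply
  let T : L.LeftTransversal := ⟨Set.range (s ∘ e.symm), Subgroup.isComplement_range_left he⟩
  have hT : ∀ q, (T.2.leftQuotientEquiv q : G) = s (e.symm q) :=
    Subgroup.IsComplement.leftQuotientEquiv_apply he
  rw [transfer_def ϕ T g]
  refine Fintype.prod_equiv e.symm _ _ fun q ↦ congrArg ϕ (Subtype.ext ?_)
  have hπe : e.symm (g⁻¹ • q) = π (e.symm q) := by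
    rw [e.symm_apply_eq, Equiv.ofBijective_apply, hπ, he]
  simp only [Subgroup.smul_apply_eq_smul_apply_inv_smul, hT, hπe, smul_eq_mul]

theorem transfer_eq_prod_out [L.FiniteIndex] [Fintype (G ⧸ L)] (ϕ : L →* A) (g : G) :
    transfer ϕ g = ∏ q : G ⧸ L, ϕ ⟨q.out⁻¹ * (g * (g⁻¹ • q).out),
      inv_mul_mul_mem_of_coe_eq_inv_smul (by simp only [out_eq'])⟩ :=
  transfer_eq_prod_of_bijective ϕ (Quotient.out : G ⧸ L → G)
    (by simp only [out_eq']; exact Function.bijective_id) g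
    (fun q : G ⧸ L ↦ g⁻¹ • q)
    fun _ ↦ by simp only [out_eq']

end MonoidHom

section DoubleCoset

variable {G : Type*} [Group G] {H K : Subgroup G}

lemma mem_dcA_iff {w : G} {a : H} : a ∈ dcA H K w ↔ w * a * w⁻¹ ∈ K := by
  rw [dcA, Subgroup.mem_subgroupOf, Subgroup.mem_map_equiv, MulAut.conj_symm_apply, inv_inv]

lemma coe_mul_inv_eq_coe_mul_inv_iff {w : G} {a b : H} :
    (((a : G) * w⁻¹ : G) : G ⧸ K) = ((b : G) * w⁻¹ : G) ↔ (a : H ⧸ dcA H K w) = b := by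
  rw [QuotientGroup.eq, QuotientGroup.eq, mem_dcA_iff]
  constructor <;> intro h <;> convert h using 1 <;> push_cast <;> group

variable (H K) in
def dcCoset (w : G) : H ⧸ dcA H K w → G ⧸ K :=
  Quotient.lift (fun a : H ↦ (((a : G) * w⁻¹ : G) : G ⧸ K))
    fun _ _ hab ↦ coe_mul_inv_eq_coe_mul_inv_iff.mpr (Quotient.sound hab)

lemma dcCoset_mk (w : G) (a : H) : dcCoset H K w a = ((a : G) * w⁻¹ : G) := rfl

lemma dcCoset_out (w : G) (r : H ⧸ dcA H K w) : dcCoset H K w r = ((r.out : G) * w⁻¹ : G) := by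
  conv_lhs => rw [← QuotientGroup.out_eq' r]
  rfl

lemma dcCoset_injective (w : G) : Function.Injective (dcCoset H K w) := by
  rintro ⟨a⟩ ⟨b⟩ h
  exact coe_mul_inv_eq_coe_mul_inv_iff.mp h

lemma dcCoset_smul (w : G) (y : H) (r : H ⧸ dcA H K w) :
    dcCoset H K w (y • r) = (y : G) • dcCoset H K w r := by
  induction r using QuotientGroup.induction_on with
  | H a =>
    simp only [MulAction.Quotient.smul_mk, dcCoset_mk, smul_eq_mul, Subgroup.coe_mul, mul_assoc]

lemma eq_of_dcCoset_eq {W : Finset G}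
    (hW : ∀ g : G, ∃! w, w ∈ W ∧ ∃ k ∈ K, ∃ h ∈ H, g = k * w * h) {w w' : G} (hw : w ∈ W)
    (hw' : w' ∈ W) {r : H ⧸ dcA H K w} {r' : H ⧸ dcA H K w'}
    (h : dcCoset H K w r = dcCoset H K w' r') : w = w' := by
  induction r, r' using Quotient.inductionOn₂' with | h a b =>
  have hk := QuotientGroup.eq.mp h
  refine (hW w').unique ⟨hw, _, K.inv_mem hk, _, (a⁻¹ * b).2, ?_⟩
    ⟨hw', 1, K.one_mem, 1, H.one_mem, by group⟩
  push_cast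
  group

variable (H K) in
def dcCosetSigma (W : Finset G) : (Σ w : W, H ⧸ dcA H K w) → G ⧸ K :=
  fun p ↦ dcCoset H K p.1 p.2

lemma dcCosetSigma_bijective {W : Finset G}
    (hW : ∀ g : G, ∃! w, w ∈ W ∧ ∃ k ∈ K, ∃ h ∈ H, g = k * w * h) :
    Function.Bijective (dcCosetSigma H K W) := by
  constructor
  · rintro ⟨⟨w, hw⟩, r⟩ ⟨⟨w', hw'⟩, r'⟩ h
    obtain rfl : w = w' := eq_of_dcCoset_eq hW hw hw' h
    exact Sigma.ext rfl (heq_of_eq (dcCoset_injective w h))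
  · intro q
    induction q using QuotientGroup.induction_on with | H g =>
    obtain ⟨w, ⟨hw, k, hk, h, hh, hg⟩, -⟩ := hW g⁻¹
    refine ⟨⟨⟨w, hw⟩, ((⟨h, hh⟩⁻¹ : H) : H ⧸ dcA H K w)⟩, QuotientGroup.eq.mpr ?_⟩
    rw [← inv_inv g, hg]
    convert K.inv_mem hk using 1
    push_cast
    group

end DoubleCoset

/-- Mackey formula for the transfer on abelianizations: for `W` a set of
representatives of `K\G/H`, the composition of `H^{ab} → G^{ab}` with
`Ver^G_K : G^{ab} → K^{ab}` equals the product over `w ∈ W` of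
`H^{ab} → (w⁻¹Kw ∩ H)^{ab} ≅ (K ∩ wHw⁻¹)^{ab} → K^{ab}` (transfer, then
conjugation by `w`, then inclusion). -/
theorem mackey_transfer_abelianization {G : Type*} [Group G] [Finite G]
    (H K : Subgroup G) (W : Finset G)
    (hW : ∀ g : G, ∃! w, w ∈ W ∧ ∃ k ∈ K, ∃ h ∈ H, g = k * w * h) :
    ∀ x : H,
      MonoidHom.transfer (Abelianization.of : K →* Abelianization K) (x : G)
        = ∏ w ∈ W,
            Abelianization.map (dcB H K w).subtype
              (Abelianization.map (dcConj H K w)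
                (MonoidHom.transfer
                  (Abelianization.of : dcA H K w →* Abelianization (dcA H K w))
                  x)) := by
  intro x
  classical
  have := Fintype.ofFinite G
  let s : (Σ w : W, H ⧸ dcA H K w) → G := fun p ↦ (p.2.out : G) * (p.1 : G)⁻¹
  have hs : (fun p ↦ (s p : G ⧸ K)) = dcCosetSigma H K W :=
    funext fun p ↦ (dcCoset_out _ _).symm
  rw [MonoidHom.transfer_eq_prod_of_bijective _ s (hs ▸ dcCosetSigma_bijective hW) x
    (fun p ↦ ⟨p.1, x⁻¹ • p.2⟩) fun p ↦ by
      simp only [s, ← dcCoset_out, dcCoset_smul, Subgroup.coe_inv],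
    Fintype.prod_sigma, ← Finset.prod_coe_sort W]
  refine Fintype.prod_congr _ _ fun w ↦ ?_
  rw [MonoidHom.transfer_eq_prod_out, map_prod, map_prod]
  refine Fintype.prod_congr _ _ fun r ↦ ?_
  rw [Abelianization.map_of, Abelianization.map_of]
  congr 1
  ext
  simp only [s, dcConj, MonoidHom.coe_mk, OneHom.coe_mk, Subgroup.coe_subtype]
  push_cast
  group
end
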